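/- Let G be a finite group and let H ≤ K be subgroups of G with K ≠ G. Consider the transitive actions of G by right multiplication on the coset spaces G/H and G/K. Then m(G acting on G/K) ≤ m(G acting on G/H) ≤ |K : H| · m(G acting on G/K). -/

import Mathlib

open Pointwise

/-- A subset `A` of `Ω` is *non-self-separable* for the action of `G` if every translate
`g • A` meets `A`. -/
def NonSelfSep (G : Type*) [Group G] {Ω : Type*} [MulAction G Ω] (A : Set Ω) : Prop :=
  ∀ g : G, (A ∩ g • A).Nonempty

/-- `mParam G Ω` is the minimum cardinality of a non-self-separable subset of `Ω`. -/
noncomputable def mParam (G Ω : Type*) [Group G] [MulAction G Ω] : ℕ :=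
  sInf {k | ∃ A : Set Ω, A.ncard = k ∧ NonSelfSep G A}

/-!
The projection `G ⧸ H → G ⧸ K` is `G`-equivariant and surjective, and each of its fibres is
in bijection with `K ⧸ H`. Equivariant images and surjective preimages of non-self-separable
sets are again non-self-separable; taking the image of a minimal such set in `G ⧸ H` gives the
first inequality, and taking the preimage of a minimal one in `G ⧸ K` gives the second.
-/

theorem Set.ncard_preimage_eq_card_mul_of_equiv_prod {α β γ : Type*} (f : α → β)
    (e : α ≃ β × γ) (he : ∀ x, (e x).1 = f x) (B : Set β) :
    (f ⁻¹' B).ncard = Nat.card γ * B.ncard := by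
  have : f ⁻¹' B = e ⁻¹' (B ×ˢ Set.univ) := by
    ext x
    simp [he]
  rw [this, Set.ncard_preimage_of_injective_subset_range e.injective (by simp),
    Set.ncard_prod, Set.ncard_univ, mul_comm]

namespace NonSelfSep

variable {G α β : Type*} [Group G] [MulAction G α] [MulAction G β]

theorem univ [Nonempty α] : NonSelfSep G (Set.univ : Set α) := fun g ↦ by
  simp only [Set.smul_set_univ, Set.univ_inter, Set.univ_nonempty]

theorem image (f : α →[G] β) {A : Set α} (hA : NonSelfSep G A) : NonSelfSep G (f '' A) :=
  fun g ↦ ((hA g).image f).mono <| by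
    rw [← image_smul_set]
    exact Set.image_inter_subset _ _ _

theorem preimage (f : α →[G] β) (hf : Function.Surjective f) {B : Set β}
    (hB : NonSelfSep G B) : NonSelfSep G (f ⁻¹' B) := fun g ↦ by
  rw [← Group.preimage_smul_set, ← Set.preimage_inter]
  exact (hB g).preimage hf

end NonSelfSep

section mParam

variable (G : Type*) {α β γ : Type*} [Group G] [MulAction G α] [MulAction G β]

theorem mParam_le_ncard {A : Set α} (hA : NonSelfSep G A) : mParam G α ≤ A.ncard :=
  Nat.sInf_le ⟨A, rfl, hA⟩

theorem exists_nonSelfSep_ncard_eq_mParam [Nonempty α] :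
    ∃ A : Set α, A.ncard = mParam G α ∧ NonSelfSep G A :=
  Nat.sInf_mem (s := {k | ∃ A : Set α, A.ncard = k ∧ NonSelfSep G A})
    ⟨_, Set.univ, rfl, NonSelfSep.univ⟩

variable {G}

theorem mParam_le_of_mulActionHom [Finite α] [Nonempty α] (f : α →[G] β) :
    mParam G β ≤ mParam G α := by
  obtain ⟨A, hAcard, hA⟩ := exists_nonSelfSep_ncard_eq_mParam G (α := α)
  calc mParam G β ≤ (f '' A).ncard := mParam_le_ncard G (hA.image f)
    _ ≤ A.ncard := Set.ncard_image_le A.toFinite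
    _ = mParam G α := hAcard

theorem mParam_le_mul_of_mulActionHom [Nonempty β] (f : α →[G] β) (hf : Function.Surjective f)
    (e : α ≃ β × γ) (he : ∀ x, (e x).1 = f x) :
    mParam G α ≤ Nat.card γ * mParam G β := by
  obtain ⟨B, hBcard, hB⟩ := exists_nonSelfSep_ncard_eq_mParam G (α := β)
  calc mParam G α ≤ (f ⁻¹' B).ncard := mParam_le_ncard G (hB.preimage f hf)
    _ = Nat.card γ * mParam G β := by
      rw [Set.ncard_preimage_eq_card_mul_of_equiv_prod f e he, hBcard]

end mParam

namespace Subgroup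

variable {G : Type*} [Group G] {H K : Subgroup G}

def quotientMapOfLEMulActionHom (hHK : H ≤ K) : G ⧸ H →[G] G ⧸ K where
  toFun := quotientMapOfLE hHK
  map_smul' g x := by
    induction x using QuotientGroup.induction_on
    rfl

theorem quotientMapOfLE_surjective (hHK : H ≤ K) : Function.Surjective (quotientMapOfLE hHK) :=
  fun y ↦ by
    induction y using QuotientGroup.induction_on with
    | H a => exact ⟨a, rfl⟩

theorem quotientEquivProdOfLE_fst (hHK : H ≤ K) (x : G ⧸ H) :
    (quotientEquivProdOfLE hHK x).1 = quotientMapOfLE hHK x := by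
  induction x using QuotientGroup.induction_on
  rfl

end Subgroup

theorem stmt7_general (G : Type*) [Group G] [Finite G]
    (H K : Subgroup G) (hHK : H ≤ K) :
    mParam G (G ⧸ K) ≤ mParam G (G ⧸ H) ∧
      mParam G (G ⧸ H) ≤ H.relIndex K * mParam G (G ⧸ K) :=
  ⟨mParam_le_of_mulActionHom (Subgroup.quotientMapOfLEMulActionHom hHK),
    mParam_le_mul_of_mulActionHom (Subgroup.quotientMapOfLEMulActionHom hHK)
      (Subgroup.quotientMapOfLE_surjective hHK) _ (Subgroup.quotientEquivProdOfLE_fst hHK)⟩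

/-- Let `G` be a finite group and `H ≤ K ≤ G` with `K ≠ G`.  For the
transitive actions of `G` on the coset spaces `G/H` and `G/K` one has
`m(G ↷ G/K) ≤ m(G ↷ G/H) ≤ |K : H| · m(G ↷ G/K)`. -/
theorem stmt7 (G : Type*) [Group G] [Finite G]
    (H K : Subgroup G) (hHK : H ≤ K) (hK : K ≠ ⊤) :
    mParam G (G ⧸ K) ≤ mParam G (G ⧸ H) ∧
      mParam G (G ⧸ H) ≤ H.relIndex K * mParam G (G ⧸ K) :=
  stmt7_general G H K hHK
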